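/- arXiv:2104.04917 — 3 statements merged into one kernel-verified Lean document; each statement's English description precedes it below -/
import Mathlib

section
/- Let M:ℝ→ℝ^{n×n} be a continuously differentiable symmetric-matrix-valued function with a₁I ⪯ M(t) ⪯ a₂I for constants a₂ ≥ a₁ > 0, and let A:ℝ→ℝ^{n×n} be continuous. If Ṁ(t) + A(t)ᵀM(t) + M(t)A(t) + 2λM(t) ⪯ 0 for all t, then every solution of δ̇ = A(t)δ satisfies |δ(t)| ≤ √(a₂/a₁) e^{-λ t} |δ(0)| for all t ≥ 0. -/
open Matrix
attribute [local instance] Matrix.normedAddCommGroup Matrix.normedSpace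

/-!
The metric `M` turns `V(t) = δ(t)ᵀ M(t) δ(t)` into a Lyapunov function: along `δ̇ = Aδ` its
derivative is `δᵀ (Ṁ + AᵀM + MA) δ`, which the matrix inequality bounds by `-2λ V`, so Grönwall
gives `V(t) ≤ e^{-2λt} V(0)`. The bounds `a₁ I ⪯ M ⪯ a₂ I` compare `V` with `|δ|²` at both ends:
`a₁ |δ(t)|² ≤ V(t) ≤ e^{-2λt} V(0) ≤ a₂ e^{-2λt} |δ(0)|²`.
-/

namespace Matrix

variable {ι : Type*} [Fintype ι]

theorem PosSemidef.dotProduct_mulVec_le {R : Type*} [Ring R] [PartialOrder R] [StarRing R]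
    [IsOrderedAddMonoid R] {P Q : Matrix ι ι R} (h : (Q - P).PosSemidef) (x : ι → R) :
    star x ⬝ᵥ P *ᵥ x ≤ star x ⬝ᵥ Q *ᵥ x := by
  have := h.dotProduct_mulVec_nonneg x
  rwa [sub_mulVec, dotProduct_sub, sub_nonneg] at this

section Deriv

variable {𝕜 : Type*} [NontriviallyNormedField 𝕜] {t : 𝕜}

theorem _root_.HasDerivAt.dotProduct {u v : 𝕜 → ι → 𝕜} {u' v' : ι → 𝕜}
    (hu : HasDerivAt u u' t) (hv : HasDerivAt v v' t) :
    HasDerivAt (fun s => u s ⬝ᵥ v s) (u' ⬝ᵥ v t + u t ⬝ᵥ v') t := by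
  have hu' := hasDerivAt_pi.1 hu
  have hv' := hasDerivAt_pi.1 hv
  have h := HasDerivAt.fun_sum (u := Finset.univ) fun i _ => (hu' i).fun_mul (hv' i)
  rwa [Finset.sum_add_distrib] at h

theorem _root_.HasDerivAt.mulVec {P : 𝕜 → Matrix ι ι 𝕜} {x : 𝕜 → ι → 𝕜} {P' : Matrix ι ι 𝕜}
    {x' : ι → 𝕜} (hP : HasDerivAt P P' t) (hx : HasDerivAt x x' t) :
    HasDerivAt (fun s => P s *ᵥ x s) (P' *ᵥ x t + P t *ᵥ x') t := by
  have hP' : ∀ i, HasDerivAt (fun s => P s i) (P' i) t := hasDerivAt_pi.1 hP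
  exact hasDerivAt_pi.2 fun i => (hP' i).dotProduct hx

theorem hasDerivAt_dotProduct_mulVec_of_hasDerivAt_mulVec {P : 𝕜 → Matrix ι ι 𝕜}
    {x : 𝕜 → ι → 𝕜} {A P' : Matrix ι ι 𝕜} (hP : HasDerivAt P P' t)
    (hx : HasDerivAt x (A *ᵥ x t) t) :
    HasDerivAt (fun s => x s ⬝ᵥ P s *ᵥ x s) (x t ⬝ᵥ (P' + Aᵀ * P t + P t * A) *ᵥ x t) t := by
  convert hx.dotProduct (hP.mulVec hx) using 1
  rw [add_mulVec, add_mulVec, dotProduct_add, dotProduct_add, dotProduct_add, ← mulVec_mulVec,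
    ← mulVec_mulVec, dotProduct_mulVec (x t) Aᵀ, vecMul_transpose]
  abel

end Deriv

end Matrix

theorem EuclideanSpace.dotProduct_self_eq_norm_sq {ι : Type*} [Fintype ι]
    (x : EuclideanSpace ℝ ι) :
    x.ofLp ⬝ᵥ x.ofLp = ‖x‖ ^ 2 := by
  rw [← real_inner_self_eq_norm_sq, EuclideanSpace.inner_eq_star_dotProduct, star_trivial]

theorem EuclideanSpace.dotProduct_smul_one_mulVec {ι : Type*} [Fintype ι] [DecidableEq ι]
    (a : ℝ) (x : EuclideanSpace ℝ ι) :
    x.ofLp ⬝ᵥ (a • 1 : Matrix ι ι ℝ) *ᵥ x.ofLp = a * ‖x‖ ^ 2 := by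
  rw [smul_mulVec, one_mulVec, dotProduct_smul, smul_eq_mul, dotProduct_self_eq_norm_sq]

namespace Matrix.PosSemidef

variable {ι : Type*} [Fintype ι] [DecidableEq ι] {P : Matrix ι ι ℝ} {a : ℝ}

theorem mul_norm_sq_le_dotProduct_mulVec (h : (P - a • 1).PosSemidef) (x : EuclideanSpace ℝ ι) :
    a * ‖x‖ ^ 2 ≤ x.ofLp ⬝ᵥ P *ᵥ x.ofLp := by
  simpa only [star_trivial, EuclideanSpace.dotProduct_smul_one_mulVec] using
    h.dotProduct_mulVec_le x.ofLp

theorem dotProduct_mulVec_le_mul_norm_sq (h : (a • 1 - P).PosSemidef) (x : EuclideanSpace ℝ ι) :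
    x.ofLp ⬝ᵥ P *ᵥ x.ofLp ≤ a * ‖x‖ ^ 2 := by
  simpa only [star_trivial, EuclideanSpace.dotProduct_smul_one_mulVec] using
    h.dotProduct_mulVec_le x.ofLp

end Matrix.PosSemidef

theorem le_mul_exp_of_hasDerivAt_le_mul {f f' : ℝ → ℝ} {c : ℝ}
    (hf : ∀ t, HasDerivAt f (f' t) t) (hbound : ∀ t, f' t ≤ c * f t) {t : ℝ} (ht : 0 ≤ t) :
    f t ≤ f 0 * Real.exp (c * t) := by
  have h := le_gronwallBound_of_liminf_deriv_right_le (ε := 0) (b := t)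
    (fun s _ => (hf s).continuousAt.continuousWithinAt)
    (fun s _ _ hr => (hf s).hasDerivWithinAt.liminf_right_slope_le hr) le_rfl
    (fun s _ => (hbound s).trans_eq (add_zero _).symm) t ⟨ht, le_rfl⟩
  rwa [gronwallBound_ε0, sub_zero] at h

theorem le_sqrt_div_mul_of_mul_sq_le {a b x y : ℝ} (ha : 0 < a) (hx : 0 ≤ x) (hy : 0 ≤ y)
    (h : a * x ^ 2 ≤ b * y ^ 2) : x ≤ √(b / a) * y := by
  have hsq : x ^ 2 ≤ b / a * y ^ 2 := by
    rw [div_mul_eq_mul_div, le_div_iff₀ ha]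
    linarith
  calc x = √(x ^ 2) := (Real.sqrt_sq hx).symm
    _ ≤ √(b / a * y ^ 2) := Real.sqrt_le_sqrt hsq
    _ = √(b / a) * y := by rw [Real.sqrt_mul' _ (sq_nonneg y), Real.sqrt_sq hy]

theorem contraction_metric_exponential_decay_general {n : ℕ}
    (a₁ a₂ lam : ℝ) (ha₁ : 0 < a₁)
    (M M' A : ℝ → Matrix (Fin n) (Fin n) ℝ)
    (hMderiv : ∀ t, HasDerivAt M (M' t) t)
    (hMlb : ∀ t, (M t - a₁ • (1 : Matrix (Fin n) (Fin n) ℝ)).PosSemidef)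
    (hMub : ∀ t, (a₂ • (1 : Matrix (Fin n) (Fin n) ℝ) - M t).PosSemidef)
    (hLMI : ∀ t, (-(M' t + (A t)ᵀ * M t + M t * A t + (2 * lam) • M t)).PosSemidef)
    (δ : ℝ → EuclideanSpace ℝ (Fin n))
    (hδ : ∀ t, HasDerivAt δ (WithLp.toLp 2 ((A t) *ᵥ (δ t))) t) :
    ∀ t ≥ (0:ℝ), ‖δ t‖ ≤ Real.sqrt (a₂ / a₁) * Real.exp (-lam * t) * ‖δ 0‖ := by
  intro t ht
  set V : ℝ → ℝ := fun s => (δ s).ofLp ⬝ᵥ M s *ᵥ (δ s).ofLp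
  set V' : ℝ → ℝ := fun s => (δ s).ofLp ⬝ᵥ (M' s + (A s)ᵀ * M s + M s * A s) *ᵥ (δ s).ofLp
  have hV : ∀ s, HasDerivAt V (V' s) s := fun s =>
    hasDerivAt_dotProduct_mulVec_of_hasDerivAt_mulVec (hMderiv s)
      ((PiLp.hasFDerivAt_ofLp 2 (δ s)).comp_hasDerivAt s (hδ s))
  have hV'_le : ∀ s, V' s ≤ -(2 * lam) * V s := fun s => by
    have h := (hLMI s).dotProduct_mulVec_nonneg (δ s).ofLp
    rw [star_trivial, neg_mulVec, dotProduct_neg, add_mulVec, dotProduct_add, smul_mulVec,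
      dotProduct_smul, smul_eq_mul] at h
    linarith
  rw [mul_assoc]
  refine le_sqrt_div_mul_of_mul_sq_le ha₁ (norm_nonneg _) (by positivity) ?_
  calc a₁ * ‖δ t‖ ^ 2 ≤ V t := (hMlb t).mul_norm_sq_le_dotProduct_mulVec (δ t)
    _ ≤ V 0 * Real.exp (-(2 * lam) * t) := le_mul_exp_of_hasDerivAt_le_mul hV hV'_le ht
    _ ≤ a₂ * ‖δ 0‖ ^ 2 * Real.exp (-(2 * lam) * t) := by
      gcongr
      exact (hMub 0).dotProduct_mulVec_le_mul_norm_sq (δ 0)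
    _ = a₂ * (Real.exp (-lam * t) * ‖δ 0‖) ^ 2 := by
      rw [mul_pow, ← Real.exp_nat_mul]
      ring_nf

/-- If a C¹ symmetric metric `M(t)` with `a₁ I ⪯ M(t) ⪯ a₂ I`
(`a₂ ≥ a₁ > 0`) satisfies `Ṁ + AᵀM + MA + 2λM ⪯ 0` for all `t`, then every
solution of `δ̇ = A(t)δ` satisfies `|δ(t)| ≤ √(a₂/a₁) e^{-λt} |δ(0)|` for `t ≥ 0`. -/
theorem contraction_metric_exponential_decay {n : ℕ}
    (a₁ a₂ lam : ℝ) (ha₁ : 0 < a₁) (ha₁₂ : a₁ ≤ a₂) (hlam : 0 < lam)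
    (M M' A : ℝ → Matrix (Fin n) (Fin n) ℝ)
    (hMderiv : ∀ t, HasDerivAt M (M' t) t)
    (hM'cont : Continuous M')
    (hMsym : ∀ t, (M t).IsSymm)
    (hMlb : ∀ t, (M t - a₁ • (1 : Matrix (Fin n) (Fin n) ℝ)).PosSemidef)
    (hMub : ∀ t, (a₂ • (1 : Matrix (Fin n) (Fin n) ℝ) - M t).PosSemidef)
    (hAcont : Continuous A)
    (hLMI : ∀ t, (-(M' t + (A t)ᵀ * M t + M t * A t + (2 * lam) • M t)).PosSemidef)
    (δ : ℝ → EuclideanSpace ℝ (Fin n))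
    (hδ : ∀ t, HasDerivAt δ (WithLp.toLp 2 ((A t) *ᵥ (δ t))) t) :
    ∀ t ≥ (0:ℝ), ‖δ t‖ ≤ Real.sqrt (a₂ / a₁) * Real.exp (-lam * t) * ‖δ 0‖ :=
  contraction_metric_exponential_decay_general a₁ a₂ lam ha₁ M M' A hMderiv hMlb hMub hLMI δ hδ
end

section
/- Consider the nonlinear system ẋ = f(x,u) and a virtual system χ̇ = F(χ,x,μ) satisfying F(x,x,u) = f(x,u) for all (x,u). Suppose for every state trajectory x(·) of the nonlinear system, the time-varying system χ̇ = F(χ, x(t), μ) under the feedback μ = μ* + κ^{fb}(χ, χ*, x(t)) (with κ^{fb}(χ*,χ*,x)=0) renders any two of its solutions exponentially convergent with rate λ and overshoot R: |χ₁(t)−χ₂(t)| ≤ R e^{−λt}|χ₁(0)−χ₂(0)|. Suppose further there exists κ^{ff} such that for every reference trajectory (x*,u*) ∈ B* and every trajectory x(·), the pair (χ, μ) = (x*(t), κ^{ff}(x(t),x*(t),u*(t))) solves χ̇ = F(χ, x(t), μ). Then the controller u = κ^{ff}(x,x*,u*) + κ^{fb}(x, x*, x) makes the closed-loop nonlinear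 system satisfy |x(t) − x*(t)| ≤ R e^{−λt}|x(0) − x*(0)| for every (x*,u*) ∈ B*. -/
/-- Theorem 1, NPV/virtual-system control: if the virtual system
`χ̇ = F(χ, x(t), μ)` embedding `ẋ = f(x,u)` (i.e. `F(x,x,u) = f(x,u)`) is, under the
feedback `μ = μ* + κ^{fb}(χ, χ*, x(t))`, universally exponentially contracting (rate `λ`,
overshoot `R`) for every trajectory `x(·)` of the nonlinear system, and the feed-forward
`κ^{ff}` makes every reference `(x*,u*) ∈ B*` an admissible virtual trajectory, then the
controller `u = κ^{ff}(x,x*,u*) + κ^{fb}(x,x*,x)` exponentially stabilizes every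
reference in `B*`. -/
theorem vccm_npv_universal_stabilization {n m : ℕ} (R lam : ℝ) (hR : 0 < R) (hlam : 0 < lam)
    (f : EuclideanSpace ℝ (Fin n) → EuclideanSpace ℝ (Fin m) → EuclideanSpace ℝ (Fin n))
    (F : EuclideanSpace ℝ (Fin n) → EuclideanSpace ℝ (Fin n) → EuclideanSpace ℝ (Fin m) →
      EuclideanSpace ℝ (Fin n))
    (hFf : ∀ x u, F x x u = f x u)
    (κfb : EuclideanSpace ℝ (Fin n) → EuclideanSpace ℝ (Fin n) → EuclideanSpace ℝ (Fin n) →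
      EuclideanSpace ℝ (Fin m))
    (hκfb0 : ∀ χs x, κfb χs χs x = 0)
    (κff : EuclideanSpace ℝ (Fin n) → EuclideanSpace ℝ (Fin n) → EuclideanSpace ℝ (Fin m) →
      EuclideanSpace ℝ (Fin m))
    (Bstar : Set ((ℝ → EuclideanSpace ℝ (Fin n)) × (ℝ → EuclideanSpace ℝ (Fin m))))
    (hBstar : ∀ p ∈ Bstar, ∀ t, HasDerivAt p.1 (f (p.1 t) (p.2 t)) t)
    -- C1: universal contraction of the closed-loop virtual system, for every
    -- trajectory x(·) of the nonlinear system: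
    (hC1 : ∀ (x : ℝ → EuclideanSpace ℝ (Fin n)) (uin : ℝ → EuclideanSpace ℝ (Fin m)),
      (∀ t, HasDerivAt x (f (x t) (uin t)) t) →
      ∀ (χs : ℝ → EuclideanSpace ℝ (Fin n)) (μs : ℝ → EuclideanSpace ℝ (Fin m)),
        (∀ t, HasDerivAt χs (F (χs t) (x t) (μs t)) t) →
        ∀ χ₁ χ₂ : ℝ → EuclideanSpace ℝ (Fin n),
          (∀ t, HasDerivAt χ₁ (F (χ₁ t) (x t) (μs t + κfb (χ₁ t) (χs t) (x t))) t) →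
          (∀ t, HasDerivAt χ₂ (F (χ₂ t) (x t) (μs t + κfb (χ₂ t) (χs t) (x t))) t) →
          ∀ t ≥ (0:ℝ), ‖χ₁ t - χ₂ t‖ ≤ R * Real.exp (-lam * t) * ‖χ₁ 0 - χ₂ 0‖)
    -- C2: feed-forward makes every reference admissible for the virtual system,
    -- for every trajectory x(·) of the nonlinear system:
    (hC2 : ∀ p ∈ Bstar, ∀ (x : ℝ → EuclideanSpace ℝ (Fin n)) (uin : ℝ → EuclideanSpace ℝ (Fin m)),
      (∀ t, HasDerivAt x (f (x t) (uin t)) t) →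
      ∀ t, HasDerivAt p.1 (F (p.1 t) (x t) (κff (x t) (p.1 t) (p.2 t))) t) :
    -- conclusion: closed-loop exponential tracking of every reference in B*
    ∀ p ∈ Bstar, ∀ x : ℝ → EuclideanSpace ℝ (Fin n),
      (∀ t, HasDerivAt x
        (f (x t) (κff (x t) (p.1 t) (p.2 t) + κfb (x t) (p.1 t) (x t))) t) →
      ∀ t ≥ (0:ℝ), ‖x t - p.1 t‖ ≤ R * Real.exp (-lam * t) * ‖x 0 - p.1 0‖ := by
  intro p hp x hx t ht
  set uin : ℝ → EuclideanSpace ℝ (Fin m) :=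
    fun t => κff (x t) (p.1 t) (p.2 t) + κfb (x t) (p.1 t) (x t) with huin
  have hx' : ∀ t, HasDerivAt x (f (x t) (uin t)) t := hx
  set μs : ℝ → EuclideanSpace ℝ (Fin m) := fun t => κff (x t) (p.1 t) (p.2 t) with hμs
  have hχs : ∀ t, HasDerivAt p.1 (F (p.1 t) (x t) (μs t)) t := hC2 p hp x uin hx'
  have h1 : ∀ t, HasDerivAt x (F (x t) (x t) (μs t + κfb (x t) (p.1 t) (x t))) t := by
    intro t
    rw [hFf]
    exact hx t
  have h2 : ∀ t, HasDerivAt p.1 (F (p.1 t) (x t) (μs t + κfb (p.1 t) (p.1 t) (x t))) t := by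
    intro t
    rw [hκfb0, add_zero]
    exact hχs t
  exact hC1 x uin hx' p.1 μs hχs x p.1 h1 h2 t ht
end

section
/- For the control moment gyroscope, the summand H_D of the 4×4 inertia matrix H(q) = H_A + H_B(q₃) + H_C(q₂,q₃) + H_D(q₂,q₃) is the symmetric matrix with entries H_D[1,1]=J_D, H_D[1,2]=0, H_D[1,3]=J_D c₂, H_D[1,4]=J_D s₂c₃, H_D[2,2]=I_D, H_D[2,3]=0, H_D[2,4]=−I_D s₃, H_D[3,3]=I_D s₂²+J_D c₂², H_D[3,4]=(J_D−I_D)s₂c₂c₃, H_D[4,4]=I_D s₃²+(I_D c₂²+J_D s₂²)c₃², with the remaining entries given by symmetry; this matrix is positive semidefinite for all q₂,q₃ ∈ ℝ whenever I_D, J_D ≥ 0. -/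
open Matrix Real

/-- The inertia matrix `H_D` of the flywheel D of the control moment gyroscope. -/
noncomputable def HD (ID JD q₂ q₃ : ℝ) : Matrix (Fin 4) (Fin 4) ℝ :=
  !![JD,                          0,                 JD * cos q₂,
        JD * sin q₂ * cos q₃;
     0,                           ID,                0,
        -ID * sin q₃;
     JD * cos q₂,                 0,                 ID * sin q₂ ^ 2 + JD * cos q₂ ^ 2,
        (JD - ID) * sin q₂ * cos q₂ * cos q₃;
     JD * sin q₂ * cos q₃,        -ID * sin q₃,      (JD - ID) * sin q₂ * cos q₂ * cos q₃,
        ID * sin q₃ ^ 2 + (ID * cos q₂ ^ 2 + JD * sin q₂ ^ 2) * cos q₃ ^ 2]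

/-- The flywheel inertia matrix `H_D` (symmetric by construction)
is positive semidefinite for all angles `q₂, q₃` whenever `I_D, J_D ≥ 0`. -/
theorem HD_posSemidef (ID JD q₂ q₃ : ℝ) (hI : 0 ≤ ID) (hJ : 0 ≤ JD) :
    (HD ID JD q₂ q₃).PosSemidef := by
  rw [Matrix.posSemidef_iff_dotProduct_mulVec]
  constructor
  · ext i j
    fin_cases i <;> fin_cases j <;>
      simp [HD, Matrix.conjTranspose, Matrix.vecHead, Matrix.vecTail]
  · intro x
    have key : star x ⬝ᵥ (HD ID JD q₂ q₃) *ᵥ x =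
        JD * (x 0 + cos q₂ * x 2 + sin q₂ * cos q₃ * x 3) ^ 2 +
        ID * (x 1 - sin q₃ * x 3) ^ 2 +
        ID * (sin q₂ * x 2 - cos q₂ * cos q₃ * x 3) ^ 2 := by
      simp [HD, dotProduct, Matrix.mulVec, Fin.sum_univ_succ]
      ring
    rw [key]
    positivity
end
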